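/- Let $2 \leq n \leq m$ with $n$ dividing $m$, and let $P_k$ denote the vertex set of a regular $k$-gon inscribed in the unit circle with the geodesic metric. Then the Gromov–Hausdorff distance satisfies $d_{GH}(P_n, P_m) = \frac{\pi}{n} - \frac{\pi}{m}$. -/

import Mathlib

open Real

/-- Vertex set of the regular `n`-gon inscribed in the unit circle, modeled inside
`AddCircle (2π)` whose quotient metric is exactly the geodesic metric
`d(α,β) = min (|α-β|) (2π - |α-β|)`. -/
noncomputable def Pvert (n : ℕ) : Set (AddCircle (2 * π)) :=
  Set.range fun j : Fin n => ((2 * π * j / n : ℝ) : AddCircle (2 * π))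

instance (n : ℕ) : Finite (Pvert n) := by unfold Pvert; exact (Set.finite_range _).to_subtype


instance (n : ℕ) [NeZero n] : Nonempty (Pvert n) := by
  unfold Pvert; exact ⟨⟨_, Set.mem_range_self (0 : Fin n)⟩⟩

/-! Rotating `P_n` by `π / n - π / m` puts each of its vertices (a vertex of `P_m` as well) and
each vertex of `P_m` within that angle of the other set, which gives the upper bound. Conversely,
if the Gromov–Hausdorff distance were smaller, matching each vertex of `P_m` with a close vertex
of `P_n` would send consecutive vertices of `P_m` (at distance `2π / m`) to vertices of `P_n` at
distance less than `2π / n`, hence to the same vertex; going once around `P_m`, all of it would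
be matched with a single vertex of `P_n`, leaving the others without a partner. -/

open GromovHausdorff Metric Relation

theorem sub_div_two_le_ghDist {X Y : Type*} [MetricSpace X] [CompactSpace X] [Nonempty X]
    [Nontrivial X] [MetricSpace Y] [CompactSpace Y] [Nonempty Y] {s r : ℝ} (hr : 0 ≤ r)
    (hsep : ∀ x x' : X, x ≠ x' → s ≤ dist x x') (y₀ : Y)
    (hchain : ∀ y, ReflTransGen (fun a b : Y => dist a b ≤ r) y₀ y) :
    (s - r) / 2 ≤ ghDist X Y := by
  by_contra! hlt
  obtain ⟨Φ, Ψ, hΦ, hΨ, hGH⟩ := ghDist_eq_hausdorffDist X Y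
  rw [hGH] at hlt
  have hfin : hausdorffEDist (Set.range Φ) (Set.range Ψ) ≠ ⊤ :=
    hausdorffEDist_ne_top_of_nonempty_of_bounded (Set.range_nonempty _) (Set.range_nonempty _)
      (isCompact_range hΦ.continuous).isBounded (isCompact_range hΨ.continuous).isBounded
  have partner_of_x (x : X) : ∃ y, dist (Φ x) (Ψ y) < (s - r) / 2 := by
    obtain ⟨_, ⟨y, rfl⟩, hy⟩ := exists_dist_lt_of_hausdorffDist_lt (Set.mem_range_self x) hlt hfin
    exact ⟨y, hy⟩
  have partner_of_y (y : Y) : ∃ x, dist (Φ x) (Ψ y) < (s - r) / 2 := by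
    obtain ⟨_, ⟨x, rfl⟩, hx⟩ := exists_dist_lt_of_hausdorffDist_lt' (Set.mem_range_self y) hlt hfin
    exact ⟨x, hx⟩
  -- Partners of `r`-close points are closer than `s`, hence equal.
  have partner_unique {x x' : X} {y y' : Y} (hxy : dist (Φ x) (Ψ y) < (s - r) / 2)
      (hxy' : dist (Φ x') (Ψ y') < (s - r) / 2) (hyy' : dist y y' ≤ r) : x = x' := by
    by_contra hne
    have := hsep x x' hne
    have := dist_triangle4 (Φ x) (Ψ y) (Ψ y') (Φ x')
    rw [hΦ.dist_eq, hΨ.dist_eq, dist_comm (Ψ y')] at this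
    linarith
  choose f hf using partner_of_y
  have hconst (y : Y) : f y = f y₀ := by
    induction hchain y with
    | refl => rfl
    | tail _ hstep ih => exact (partner_unique (hf _) (hf _) hstep).symm.trans ih
  obtain ⟨x, hx⟩ := exists_ne (f y₀)
  obtain ⟨y, hy⟩ := partner_of_x x
  exact hx ((partner_unique hy (hf y) (by simpa using hr)).trans (hconst y))

namespace AddCircle

variable {p : ℝ}

theorem dist_coe_le_abs_sub (a b : ℝ) : dist (a : AddCircle p) (b : AddCircle p) ≤ |a - b| := by
  rw [dist_eq_norm, ← AddCircle.coe_sub]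
  exact QuotientAddGroup.norm_mk_le_norm

theorem div_le_norm_coe_intCast_mul (hp : 0 < p) {n : ℕ} (hn : 0 < n) {t : ℤ}
    (ht : ¬ (n : ℤ) ∣ t) : p / n ≤ ‖((t * (p / n) : ℝ) : AddCircle p)‖ := by
  have hn' : (n : ℝ) ≠ 0 := by positivity
  rw [norm_eq, show p⁻¹ * (t * (p / n)) = t / n by field_simp]
  set k := round ((t : ℝ) / n)
  have hk : (t : ℝ) * (p / n) - k * p = p / n * ((t - k * n : ℤ) : ℝ) := by
    push_cast; field_simp
  have hne : t - k * n ≠ 0 := fun h => ht ⟨k, by linarith⟩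
  rw [hk, abs_mul, abs_of_pos (by positivity), ← Int.cast_abs]
  exact le_mul_of_one_le_right (by positivity) (by exact_mod_cast Int.one_le_abs hne)

end AddCircle

local notation "𝕋" => AddCircle (2 * π)

noncomputable def polygonVertex (n k : ℕ) : 𝕋 := ((2 * π * k / n : ℝ) : 𝕋)

theorem polygonVertex_mem_Pvert {n k : ℕ} (h : k < n) : polygonVertex n k ∈ Pvert n :=
  ⟨⟨k, h⟩, rfl⟩

theorem exists_polygonVertex_eq_of_mem_Pvert {n : ℕ} {x : 𝕋} (hx : x ∈ Pvert n) :
    ∃ k < n, polygonVertex n k = x := by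
  obtain ⟨j, rfl⟩ := hx
  exact ⟨j, j.2, rfl⟩

theorem polygonVertex_mul_mul {n q : ℕ} (k : ℕ) (hq : q ≠ 0) :
    polygonVertex (n * q) (k * q) = polygonVertex n k := by
  unfold polygonVertex
  congr 1
  push_cast
  field_simp

theorem two_pi_div_le_dist_of_mem_Pvert {n : ℕ} {x y : 𝕋} (hx : x ∈ Pvert n) (hy : y ∈ Pvert n)
    (hxy : x ≠ y) : 2 * π / n ≤ dist x y := by
  obtain ⟨j, hj, rfl⟩ := exists_polygonVertex_eq_of_mem_Pvert hx
  obtain ⟨k, hk, rfl⟩ := exists_polygonVertex_eq_of_mem_Pvert hy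
  have hjk : ¬ (n : ℤ) ∣ (j - k : ℤ) := by
    intro hd
    have := Int.eq_zero_of_dvd_of_natAbs_lt_natAbs hd (by omega)
    exact hxy (by rw [show j = k by omega])
  have hsub : 2 * π * j / n - 2 * π * k / n = ((j - k : ℤ) : ℝ) * (2 * π / n) := by
    push_cast; ring
  rw [polygonVertex, polygonVertex, dist_eq_norm, ← AddCircle.coe_sub, hsub]
  exact AddCircle.div_le_norm_coe_intCast_mul (by positivity) (by omega) hjk

theorem reflTransGen_dist_le_Pvert (n : ℕ) [NeZero n] (y : Pvert n) :
    ReflTransGen (fun a b : Pvert n => dist a b ≤ 2 * π / n)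
      ⟨polygonVertex n 0, polygonVertex_mem_Pvert (NeZero.pos n)⟩ y := by
  obtain ⟨y, hy⟩ := y
  obtain ⟨k, hk, rfl⟩ := exists_polygonVertex_eq_of_mem_Pvert hy
  induction k with
  | zero => rfl
  | succ k ih =>
    refine (ih (by omega) (polygonVertex_mem_Pvert (by omega))).tail ?_
    refine (AddCircle.dist_coe_le_abs_sub _ _).trans_eq ?_
    rw [show 2 * π * k / n - 2 * π * (k + 1 : ℕ) / n = -(2 * π / n) by push_cast; ring, abs_neg,
      abs_of_nonneg (by positivity)]

theorem dist_polygonVertex_mul_add_le (n : ℕ) {q : ℕ} (hq : q ≠ 0) (k : ℕ) :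
    dist (polygonVertex (n * q) k) (polygonVertex n (k / q) + ((π / n - π / (n * q : ℕ) : ℝ) : 𝕋))
      ≤ π / n - π / (n * q : ℕ) := by
  rcases Nat.eq_zero_or_pos n with rfl | hn
  · simp [polygonVertex]
  have hqR : (1 : ℝ) ≤ q := by exact_mod_cast Nat.one_le_iff_ne_zero.2 hq
  have hk : (k : ℝ) = q * (k / q : ℕ) + (k % q : ℕ) := by exact_mod_cast (Nat.div_add_mod k q).symm
  have hi : ((k % q : ℕ) : ℝ) + 1 ≤ q := by exact_mod_cast Nat.mod_lt k (Nat.pos_of_ne_zero hq)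
  have hsub : 2 * π * k / (n * q : ℕ) - (2 * π * (k / q : ℕ) / n + (π / n - π / (n * q : ℕ)))
      = (2 * (k % q : ℕ) + 1 - q) * (π / (n * q)) := by
    rw [hk]; push_cast; field_simp; ring
  have hδ : π / n - π / (n * q : ℕ) = (q - 1) * (π / (n * q)) := by
    push_cast; field_simp
  have hpos : 0 < π / (n * q) := by positivity
  refine (AddCircle.dist_coe_le_abs_sub _ _).trans ?_
  rw [hsub, hδ, abs_mul, abs_of_pos hpos]
  refine mul_le_mul_of_nonneg_right (abs_le.2 ⟨?_, ?_⟩) hpos.le <;>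
    linarith [(k % q).cast_nonneg (α := ℝ)]

theorem ghDist_Pvert_le {n m : ℕ} [NeZero n] [NeZero m] (hdvd : n ∣ m) :
    ghDist (Pvert n) (Pvert m) ≤ π / n - π / m := by
  obtain ⟨q, rfl⟩ := hdvd
  have hq : q ≠ 0 := right_ne_zero_of_mul (NeZero.ne (n * q))
  set δ := π / n - π / (n * q : ℕ)
  have hδ : 0 ≤ δ := sub_nonneg.2 <| div_le_div_of_nonneg_left pi_pos.le
    (Nat.cast_pos.2 (NeZero.pos n))
    (by exact_mod_cast Nat.le_mul_of_pos_right n (Nat.pos_of_ne_zero hq))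
  have hΦ : Isometry fun x : Pvert n => x.1 + (δ : 𝕋) :=
    (isometry_add_right (δ : 𝕋)).comp isometry_subtype_coe
  refine (ghDist_le_hausdorffDist hΦ isometry_subtype_coe).trans <|
    hausdorffDist_le_of_mem_dist hδ ?_ ?_
  · rintro _ ⟨⟨x, hx⟩, rfl⟩
    obtain ⟨k, hk, rfl⟩ := exists_polygonVertex_eq_of_mem_Pvert hx
    have hmem : polygonVertex n k ∈ Pvert (n * q) := by
      rw [← polygonVertex_mul_mul k hq]
      exact polygonVertex_mem_Pvert (Nat.mul_lt_mul_of_pos_right hk (Nat.pos_of_ne_zero hq))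
    refine ⟨polygonVertex n k, ⟨⟨_, hmem⟩, rfl⟩, ?_⟩
    simpa [abs_of_nonneg hδ] using
      AddCircle.dist_coe_le_abs_sub (p := 2 * π) (2 * π * k / n + δ) (2 * π * k / n)
  · rintro _ ⟨⟨y, hy⟩, rfl⟩
    obtain ⟨k, hk, rfl⟩ := exists_polygonVertex_eq_of_mem_Pvert hy
    refine ⟨_, ⟨⟨polygonVertex n (k / q), polygonVertex_mem_Pvert ?_⟩, rfl⟩, ?_⟩
    · exact Nat.div_lt_of_lt_mul (by rwa [mul_comm])
    · exact dist_polygonVertex_mul_add_le n hq k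

theorem nontrivial_Pvert {n : ℕ} (hn : 2 ≤ n) : Nontrivial (Pvert n) := by
  refine nontrivial_of_ne ⟨_, polygonVertex_mem_Pvert (k := 1) (by omega)⟩
    ⟨_, polygonVertex_mem_Pvert (k := 0) (by omega)⟩ fun h => ?_
  have hndvd : ¬ (n : ℤ) ∣ 1 := fun hd => by
    have := Int.eq_one_of_dvd_one (by positivity) hd
    omega
  have := AddCircle.div_le_norm_coe_intCast_mul two_pi_pos (by omega) hndvd
  have h' := congrArg Subtype.val h
  simp only [polygonVertex, Nat.cast_one, mul_one, Nat.cast_zero, mul_zero, zero_div,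
    AddCircle.coe_zero] at h'
  rw [Int.cast_one, one_mul, h', norm_zero] at this
  have : 0 < 2 * π / n := by positivity
  linarith

theorem stmt4 (n m : ℕ) (hn : 2 ≤ n) (hnm : n ≤ m) (hdvd : n ∣ m) :
    haveI : NeZero n := ⟨by omega⟩
    haveI : NeZero m := ⟨by omega⟩
    GromovHausdorff.ghDist (Pvert n) (Pvert m) = π / n - π / m := by
  have : NeZero n := ⟨by omega⟩
  have : NeZero m := ⟨by omega⟩
  have := nontrivial_Pvert hn
  refine le_antisymm (ghDist_Pvert_le hdvd) ?_
  calc π / n - π / m = (2 * π / n - 2 * π / m) / 2 := by ring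
    _ ≤ ghDist (Pvert n) (Pvert m) :=
      sub_div_two_le_ghDist (by positivity)
        (fun x x' hxx' => two_pi_div_le_dist_of_mem_Pvert x.2 x'.2 (Subtype.coe_ne_coe.2 hxx'))
        _ (reflTransGen_dist_le_Pvert m)
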